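/- Let X1, X2, X3 be mutually independent random variables on a common probability space taking values in finite sets, each with entropy a. Let Y12, Y20, Y21, Y22 be finite-valued random variables with H(Y12) ≤ a, H(Y21) ≤ a, H(Y22) ≤ a, such that Y20 is a deterministic function of (X1, X2), Y21 is a deterministic function of (Y12, Y20), and Y22 is a deterministic function of (X3, Y21). If H((X1, X2) | (Y12, Y22)) ≤ ε for some ε ≥ 0, then H((Y21, Y22)) ≤ a + 2ε. -/

import Mathlib

open scoped BigOperators

/-- The probability that the random variable `X` (on finite sample space `Ω`
with probability mass function `μ`) takes the value `a`. -/
noncomputable def probOf {Ω : Type} [Fintype Ω] {α : Type} [DecidableEq α]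
    (μ : Ω → ℝ) (X : Ω → α) (a : α) : ℝ :=
  ∑ ω : Ω, if X ω = a then μ ω else 0

/-- Shannon entropy (natural-log base) of a finite-valued random variable. -/
noncomputable def entropy {Ω : Type} [Fintype Ω] {α : Type} [Fintype α] [DecidableEq α]
    (μ : Ω → ℝ) (X : Ω → α) : ℝ :=
  ∑ a : α, -(probOf μ X a * Real.log (probOf μ X a))

/-- Conditional entropy `H(X | Y) = H(X, Y) - H(Y)`. -/
noncomputable def condEntropy {Ω : Type} [Fintype Ω] {α β : Type}
    [Fintype α] [DecidableEq α] [Fintype β] [DecidableEq β]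
    (μ : Ω → ℝ) (X : Ω → α) (Y : Ω → β) : ℝ :=
  entropy μ (fun ω => (X ω, Y ω)) - entropy μ Y

/-- `μ` is a probability mass function on the finite sample space `Ω`. -/
def IsPMF {Ω : Type} [Fintype Ω] (μ : Ω → ℝ) : Prop :=
  (∀ ω, 0 ≤ μ ω) ∧ ∑ ω : Ω, μ ω = 1

/-- Independence of two finite-valued random variables: the joint distribution
factorizes. -/
def IndepRV {Ω : Type} [Fintype Ω] {α β : Type} [DecidableEq α] [DecidableEq β]
    (μ : Ω → ℝ) (X : Ω → α) (Y : Ω → β) : Prop :=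
  ∀ a b, probOf μ (fun ω => (X ω, Y ω)) (a, b) = probOf μ X a * probOf μ Y b

/-- Mutual independence of three finite-valued random variables: the joint
distribution factorizes. -/
def MutIndep3 {Ω : Type} [Fintype Ω] {α β γ : Type}
    [DecidableEq α] [DecidableEq β] [DecidableEq γ]
    (μ : Ω → ℝ) (X : Ω → α) (Y : Ω → β) (Z : Ω → γ) : Prop :=
  ∀ a b c, probOf μ (fun ω => (X ω, Y ω, Z ω)) (a, b, c) =
    probOf μ X a * probOf μ Y b * probOf μ Z c

/-!
Write `W = (X1, X2)` and `Z = (Y12, Y22)`. Submodularity for `Y12, (Y21, Y22), X3` gives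
`H(Y21,Y22) ≤ H(Y12,Y21,Y22) + H(Y21,Y22,X3) - H(Y12,Y21,Y22,X3)`. The first term is at most
`H(W,Z)` because `Y21` is a function of `(W, Y12)`; the second is at most `H(Y21,X3) ≤ 2a`
because `Y22` is a function of `(X3, Y21)`; the third is at least `H(Z,X3)`, which by
submodularity for `W, Z, X3` and independence is at least `3a + H(Z) - H(W,Z)`. Altogether
`H(Y21,Y22) ≤ 2 H(W|Z) + H(Z) - a ≤ a + 2ε`, since `H(Z) ≤ H(Y12) + H(Y22) ≤ 2a`.

The entropy inequalities all come from Gibbs' inequality, with `H(X)` written as the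
expectation of `-log p_X(X)`.
-/

open Real

lemma mul_log_sub_mul_log_le {p q : ℝ} (hp : 0 ≤ p) (hq : 0 ≤ q) (hpq : 0 < p → 0 < q) :
    p * log q - p * log p ≤ q - p := by
  rcases hp.eq_or_lt with rfl | hp
  · simpa using hq
  have hq := hpq hp
  have h := mul_le_mul_of_nonneg_left (log_le_sub_one_of_pos (div_pos hq hp)) hp.le
  rw [log_div hq.ne' hp.ne', mul_sub, mul_sub, mul_div_cancel₀ _ hp.ne'] at h
  linarith

section

variable {Ω : Type} [Fintype Ω] {μ : Ω → ℝ} {α β γ : Type}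
  [DecidableEq α] [DecidableEq β] [DecidableEq γ]

lemma probOf_nonneg (hμ : IsPMF μ) (X : Ω → α) (x : α) : 0 ≤ probOf μ X x :=
  Finset.sum_nonneg fun ω _ => by split_ifs <;> simp [hμ.1 ω]

lemma probOf_congr {U : Ω → α} {V : Ω → β} {u : α} {v : β} (h : ∀ ω, U ω = u ↔ V ω = v) :
    probOf μ U u = probOf μ V v :=
  Finset.sum_congr rfl fun ω _ => if_congr (h ω) rfl rfl

lemma sum_probOf_mul [Fintype α] (X : Ω → α) (g : α → ℝ) :
    ∑ x, probOf μ X x * g x = ∑ ω, μ ω * g (X ω) := by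
  simp only [probOf, Finset.sum_mul, ite_mul, zero_mul]
  rw [Finset.sum_comm]
  simp

lemma sum_probOf [Fintype α] (hμ : IsPMF μ) (X : Ω → α) : ∑ x, probOf μ X x = 1 := by
  simpa [hμ.2] using sum_probOf_mul (μ := μ) X 1

lemma sum_probOf_pair_left [Fintype α] (U : Ω → α) (V : Ω → β) (v : β) :
    ∑ u, probOf μ (fun ω => (U ω, V ω)) (u, v) = probOf μ V v := by
  simp only [probOf]
  rw [Finset.sum_comm]
  refine Finset.sum_congr rfl fun ω _ => ?_
  by_cases h : V ω = v <;> simp [h]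

lemma sum_probOf_pair_right [Fintype β] (U : Ω → α) (V : Ω → β) (u : α) :
    ∑ v, probOf μ (fun ω => (U ω, V ω)) (u, v) = probOf μ U u := by
  simp only [probOf]
  rw [Finset.sum_comm]
  refine Finset.sum_congr rfl fun ω _ => ?_
  by_cases h : U ω = u <;> simp [h]

lemma le_probOf_apply (hμ : IsPMF μ) (X : Ω → α) (ω : Ω) : μ ω ≤ probOf μ X (X ω) := by
  simpa [probOf] using Finset.single_le_sum (f := fun ω' => if X ω' = X ω then μ ω' else 0)
    (fun ω' _ => by split_ifs <;> simp [hμ.1 ω']) (Finset.mem_univ ω)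

lemma exists_pos_of_probOf_pos (hμ : IsPMF μ) {X : Ω → α} {x : α} (hx : 0 < probOf μ X x) :
    ∃ ω, X ω = x ∧ 0 < μ ω := by
  obtain ⟨ω, -, hω⟩ := Finset.exists_ne_zero_of_sum_ne_zero hx.ne'
  by_cases h : X ω = x
  · exact ⟨ω, h, (hμ.1 ω).lt_of_ne (by simpa [h, eq_comm] using hω)⟩
  · simp [h] at hω

lemma sum_mul_congr_of_pos (hμ : IsPMF μ) {f g : Ω → ℝ} (h : ∀ ω, 0 < μ ω → f ω = g ω) :
    ∑ ω, μ ω * f ω = ∑ ω, μ ω * g ω := by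
  refine Finset.sum_congr rfl fun ω _ => ?_
  rcases (hμ.1 ω).eq_or_lt with h0 | hpos
  · simp [← h0]
  · rw [h ω hpos]

lemma entropy_eq_neg_sum [Fintype α] (X : Ω → α) :
    entropy μ X = -∑ ω, μ ω * log (probOf μ X (X ω)) := by
  rw [← sum_probOf_mul X (fun x => log (probOf μ X x)), entropy, ← Finset.sum_neg_distrib]

lemma probOf_apply_le_of_determines (hμ : IsPMF μ) {U : Ω → α} {V : Ω → β}
    (hUV : ∀ ω ω', U ω = U ω' → V ω = V ω') (ω : Ω) :
    probOf μ U (U ω) ≤ probOf μ V (V ω) :=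
  Finset.sum_le_sum fun ω' _ => by
    by_cases h : U ω' = U ω
    · simp [h, hUV ω' ω h]
    · simp only [h, if_false]; split_ifs <;> simp [hμ.1 ω']

lemma entropy_le_entropy_of_determines [Fintype α] [Fintype β] (hμ : IsPMF μ) {U : Ω → α}
    {V : Ω → β} (hUV : ∀ ω ω', U ω = U ω' → V ω = V ω') : entropy μ V ≤ entropy μ U := by
  rw [entropy_eq_neg_sum, entropy_eq_neg_sum, neg_le_neg_iff]
  refine Finset.sum_le_sum fun ω _ => ?_
  rcases (hμ.1 ω).eq_or_lt with h0 | hpos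
  · simp [← h0]
  · exact mul_le_mul_of_nonneg_left (log_le_log (hpos.trans_le (le_probOf_apply hμ U ω))
      (probOf_apply_le_of_determines hμ hUV ω)) hpos.le

lemma entropy_le_neg_sum_mul_log [Fintype α] (hμ : IsPMF μ) (X : Ω → α) {q : α → ℝ}
    (hq : ∀ x, 0 ≤ q x) (hq1 : ∑ x, q x ≤ 1) (hXq : ∀ ω, 0 < μ ω → 0 < q (X ω)) :
    entropy μ X ≤ -∑ ω, μ ω * log (q (X ω)) := by
  have hpq : ∀ x, 0 < probOf μ X x → 0 < q x := fun x hx => by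
    obtain ⟨ω, rfl, hω⟩ := exists_pos_of_probOf_pos hμ hx
    exact hXq ω hω
  have key : ∑ x, (probOf μ X x * log (q x) - probOf μ X x * log (probOf μ X x)) ≤
      ∑ x, (q x - probOf μ X x) :=
    Finset.sum_le_sum fun x _ => mul_log_sub_mul_log_le (probOf_nonneg hμ X x) (hq x) (hpq x)
  rw [Finset.sum_sub_distrib, Finset.sum_sub_distrib, sum_probOf hμ, sum_probOf_mul,
    sum_probOf_mul X (fun x => log (probOf μ X x))] at key
  rw [entropy_eq_neg_sum]
  linarith

lemma entropy_add_entropy_eq_neg_sum [Fintype α] [Fintype β] (hμ : IsPMF μ) (U : Ω → α)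
    (V : Ω → β) :
    entropy μ U + entropy μ V = -∑ ω, μ ω * log (probOf μ U (U ω) * probOf μ V (V ω)) := by
  rw [entropy_eq_neg_sum, entropy_eq_neg_sum, ← neg_add, ← Finset.sum_add_distrib]
  simp_rw [← mul_add]
  exact congrArg _ (sum_mul_congr_of_pos hμ fun ω hω => (log_mul
    (hω.trans_le (le_probOf_apply hμ U ω)).ne' (hω.trans_le (le_probOf_apply hμ V ω)).ne').symm)

lemma IndepRV.entropy_pair [Fintype α] [Fintype β] (hμ : IsPMF μ) {U : Ω → α} {V : Ω → β}
    (h : IndepRV μ U V) : entropy μ (fun ω => (U ω, V ω)) = entropy μ U + entropy μ V := by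
  unfold IndepRV at h
  rw [entropy_add_entropy_eq_neg_sum hμ, entropy_eq_neg_sum]
  simp only [h]

lemma entropy_pair_le_add [Fintype α] [Fintype β] (hμ : IsPMF μ) (U : Ω → α) (V : Ω → β) :
    entropy μ (fun ω => (U ω, V ω)) ≤ entropy μ U + entropy μ V := by
  rw [entropy_add_entropy_eq_neg_sum hμ]
  refine entropy_le_neg_sum_mul_log hμ (fun ω => (U ω, V ω))
    (q := fun x => probOf μ U x.1 * probOf μ V x.2)
    (fun x => mul_nonneg (probOf_nonneg hμ U _) (probOf_nonneg hμ V _)) ?_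
    (fun ω hω => mul_pos (hω.trans_le (le_probOf_apply hμ U ω))
      (hω.trans_le (le_probOf_apply hμ V ω)))
  rw [Fintype.sum_prod_type, ← Finset.sum_mul_sum, sum_probOf hμ, sum_probOf hμ, one_mul]

lemma entropy_triple_add_entropy_le [Fintype α] [Fintype β] [Fintype γ] (hμ : IsPMF μ)
    (A : Ω → α) (B : Ω → β) (C : Ω → γ) :
    entropy μ (fun ω => (A ω, B ω, C ω)) + entropy μ B ≤
      entropy μ (fun ω => (A ω, B ω)) + entropy μ (fun ω => (B ω, C ω)) := by
  set pAB := probOf μ (fun ω => (A ω, B ω))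
  set pBC := probOf μ (fun ω => (B ω, C ω))
  set pB := probOf μ B
  have hpos : ∀ ω, 0 < μ ω → 0 < pAB (A ω, B ω) ∧ 0 < pBC (B ω, C ω) ∧ 0 < pB (B ω) :=
    fun ω hω => ⟨hω.trans_le (le_probOf_apply hμ _ ω), hω.trans_le (le_probOf_apply hμ _ ω),
      hω.trans_le (le_probOf_apply hμ _ ω)⟩
  -- Compare with the law under which `A` and `C` are conditionally independent given `B`.
  have hq1 : ∑ x : α × β × γ, pAB (x.1, x.2.1) * pBC (x.2.1, x.2.2) / pB x.2.1 = 1 := by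
    simp only [Fintype.sum_prod_type]
    rw [Finset.sum_comm, ← sum_probOf hμ B]
    refine Finset.sum_congr rfl fun b _ => ?_
    calc ∑ a, ∑ c, pAB (a, b) * pBC (b, c) / pB b
        = (∑ a, pAB (a, b)) * (∑ c, pBC (b, c)) / pB b := by
          simp only [Finset.sum_mul_sum, Finset.sum_div]
      -- `x * x / x = x` holds also at `x = 0`
      _ = pB b := by rw [sum_probOf_pair_left, sum_probOf_pair_right, mul_self_div_self]
  have hcross : -∑ ω, μ ω * log (pAB (A ω, B ω) * pBC (B ω, C ω) / pB (B ω)) =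
      entropy μ (fun ω => (A ω, B ω)) + entropy μ (fun ω => (B ω, C ω)) - entropy μ B := by
    rw [entropy_eq_neg_sum, entropy_eq_neg_sum, entropy_eq_neg_sum,
      sum_mul_congr_of_pos hμ fun ω hω => by
        obtain ⟨hAB, hBC, hB⟩ := hpos ω hω
        rw [log_div (by positivity) hB.ne', log_mul hAB.ne' hBC.ne']]
    simp only [mul_add, mul_sub, Finset.sum_add_distrib, Finset.sum_sub_distrib]
    ring
  have hgibbs := entropy_le_neg_sum_mul_log hμ (fun ω => (A ω, B ω, C ω))
    (q := fun x => pAB (x.1, x.2.1) * pBC (x.2.1, x.2.2) / pB x.2.1)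
    (fun x => div_nonneg (mul_nonneg (probOf_nonneg hμ _ _) (probOf_nonneg hμ _ _))
      (probOf_nonneg hμ _ _)) hq1.le fun ω hω => by
        obtain ⟨hAB, hBC, hB⟩ := hpos ω hω
        positivity
  linarith

lemma MutIndep3.indepRV_left [Fintype γ] (hμ : IsPMF μ) {X : Ω → α} {Y : Ω → β} {Z : Ω → γ}
    (h : MutIndep3 μ X Y Z) : IndepRV μ X Y := fun x y => by
  rw [← sum_probOf_pair_right (fun ω => (X ω, Y ω)) Z (x, y), ← mul_one (_ * _),
    ← sum_probOf hμ Z, Finset.mul_sum]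
  refine Finset.sum_congr rfl fun z _ => ?_
  rw [← h x y z]
  exact probOf_congr fun ω => by simp [and_assoc]

lemma MutIndep3.indepRV_pair_left [Fintype γ] (hμ : IsPMF μ) {X : Ω → α} {Y : Ω → β}
    {Z : Ω → γ} (h : MutIndep3 μ X Y Z) : IndepRV μ (fun ω => (X ω, Y ω)) Z := by
  rintro ⟨x, y⟩ z
  rw [h.indepRV_left hμ x y, ← h x y z]
  exact probOf_congr fun ω => by simp [and_assoc]

end

theorem stmt3_general {Ω α₁ α₂ α₃ β₁₂ β₂₀ β₂₁ β₂₂ : Type} [Fintype Ω]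
    [Fintype α₁] [DecidableEq α₁] [Fintype α₂] [DecidableEq α₂]
    [Fintype α₃] [DecidableEq α₃]
    [Fintype β₁₂] [DecidableEq β₁₂]
    [Fintype β₂₁] [DecidableEq β₂₁] [Fintype β₂₂] [DecidableEq β₂₂]
    (μ : Ω → ℝ) (hμ : IsPMF μ)
    (X1 : Ω → α₁) (X2 : Ω → α₂) (X3 : Ω → α₃)
    (Y12 : Ω → β₁₂) (Y20 : Ω → β₂₀) (Y21 : Ω → β₂₁) (Y22 : Ω → β₂₂)
    (a ε : ℝ)
    (hindep : MutIndep3 μ X1 X2 X3)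
    (hX1 : entropy μ X1 = a) (hX2 : entropy μ X2 = a) (hX3 : entropy μ X3 = a)
    (hY12 : entropy μ Y12 ≤ a) (hY21 : entropy μ Y21 ≤ a) (hY22 : entropy μ Y22 ≤ a)
    (hf20 : ∃ f : α₁ × α₂ → β₂₀, ∀ ω, Y20 ω = f (X1 ω, X2 ω))
    (hf21 : ∃ g : β₁₂ × β₂₀ → β₂₁, ∀ ω, Y21 ω = g (Y12 ω, Y20 ω))
    (hf22 : ∃ h : α₃ × β₂₁ → β₂₂, ∀ ω, Y22 ω = h (X3 ω, Y21 ω))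
    (hcond : condEntropy μ (fun ω => (X1 ω, X2 ω)) (fun ω => (Y12 ω, Y22 ω)) ≤ ε) :
    entropy μ (fun ω => (Y21 ω, Y22 ω)) ≤ a + 2 * ε := by
  obtain ⟨f, hf⟩ := hf20
  obtain ⟨g, hg⟩ := hf21
  obtain ⟨h, hh⟩ := hf22
  have hX : entropy μ (fun ω => ((X1 ω, X2 ω), X3 ω)) = a + a + a := by
    rw [(hindep.indepRV_pair_left hμ).entropy_pair hμ, (hindep.indepRV_left hμ).entropy_pair hμ,
      hX1, hX2, hX3]
  have hY21_fn : entropy μ (fun ω => (Y12 ω, Y21 ω, Y22 ω)) ≤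
      entropy μ (fun ω => ((X1 ω, X2 ω), (Y12 ω, Y22 ω))) :=
    entropy_le_entropy_of_determines hμ fun _ _ _ => by grind
  have hY22_fn : entropy μ (fun ω => ((Y21 ω, Y22 ω), X3 ω)) ≤
      entropy μ (fun ω => (Y21 ω, X3 ω)) :=
    entropy_le_entropy_of_determines hμ fun _ _ _ => by grind
  have hZX3_le : entropy μ (fun ω => ((Y12 ω, Y22 ω), X3 ω)) ≤
      entropy μ (fun ω => (Y12 ω, (Y21 ω, Y22 ω), X3 ω)) :=
    entropy_le_entropy_of_determines hμ fun _ _ _ => by grind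
  have hWX3_le : entropy μ (fun ω => ((X1 ω, X2 ω), X3 ω)) ≤
      entropy μ (fun ω => ((X1 ω, X2 ω), (Y12 ω, Y22 ω), X3 ω)) :=
    entropy_le_entropy_of_determines hμ fun _ _ _ => by grind
  have hsub₁ := entropy_triple_add_entropy_le hμ Y12 (fun ω => (Y21 ω, Y22 ω)) X3
  have hsub₂ := entropy_triple_add_entropy_le hμ (fun ω => (X1 ω, X2 ω))
    (fun ω => (Y12 ω, Y22 ω)) X3
  have hadd₁ := entropy_pair_le_add hμ Y21 X3
  have hadd₂ := entropy_pair_le_add hμ Y12 Y22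
  unfold condEntropy at hcond
  linarith

/-- With `X1, X2, X3` mutually independent of entropy `a` each,
`H(Y12) ≤ a`, `H(Y21) ≤ a`, `H(Y22) ≤ a`, `Y20` a deterministic function of
`(X1, X2)`, `Y21` a deterministic function of `(Y12, Y20)`, `Y22` a deterministic
function of `(X3, Y21)`, and `H((X1,X2) | (Y12,Y22)) ≤ ε` with `ε ≥ 0`, we have
`H((Y21, Y22)) ≤ a + 2ε`. -/
theorem stmt3 {Ω α₁ α₂ α₃ β₁₂ β₂₀ β₂₁ β₂₂ : Type} [Fintype Ω]
    [Fintype α₁] [DecidableEq α₁] [Fintype α₂] [DecidableEq α₂]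
    [Fintype α₃] [DecidableEq α₃]
    [Fintype β₁₂] [DecidableEq β₁₂] [Fintype β₂₀] [DecidableEq β₂₀]
    [Fintype β₂₁] [DecidableEq β₂₁] [Fintype β₂₂] [DecidableEq β₂₂]
    (μ : Ω → ℝ) (hμ : IsPMF μ)
    (X1 : Ω → α₁) (X2 : Ω → α₂) (X3 : Ω → α₃)
    (Y12 : Ω → β₁₂) (Y20 : Ω → β₂₀) (Y21 : Ω → β₂₁) (Y22 : Ω → β₂₂)
    (a ε : ℝ) (hε : 0 ≤ ε)
    (hindep : MutIndep3 μ X1 X2 X3)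
    (hX1 : entropy μ X1 = a) (hX2 : entropy μ X2 = a) (hX3 : entropy μ X3 = a)
    (hY12 : entropy μ Y12 ≤ a) (hY21 : entropy μ Y21 ≤ a) (hY22 : entropy μ Y22 ≤ a)
    (hf20 : ∃ f : α₁ × α₂ → β₂₀, ∀ ω, Y20 ω = f (X1 ω, X2 ω))
    (hf21 : ∃ g : β₁₂ × β₂₀ → β₂₁, ∀ ω, Y21 ω = g (Y12 ω, Y20 ω))
    (hf22 : ∃ h : α₃ × β₂₁ → β₂₂, ∀ ω, Y22 ω = h (X3 ω, Y21 ω))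
    (hcond : condEntropy μ (fun ω => (X1 ω, X2 ω)) (fun ω => (Y12 ω, Y22 ω)) ≤ ε) :
    entropy μ (fun ω => (Y21 ω, Y22 ω)) ≤ a + 2 * ε :=
  stmt3_general μ hμ X1 X2 X3 Y12 Y20 Y21 Y22 a ε hindep hX1 hX2 hX3 hY12 hY21 hY22 hf20 hf21 hf22
    hcond
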